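/- For u ∈ ℝ³ with ‖u‖ = 1 and any angle θ, the matrix exponential satisfies Rodrigues' formula: exp(θ û) = I + sin(θ) û + (1 − cos(θ)) û². -/

import Mathlib

open NormedSpace
open scoped Nat

/-- The hat map sending `u ∈ ℝ³` (Euclidean) to the skew-symmetric matrix `û`. -/
def hat (u : EuclideanSpace ℝ (Fin 3)) : Matrix (Fin 3) (Fin 3) ℝ :=
  !![0, -u 2, u 1; u 2, 0, -u 0; -u 1, u 0, 0]

lemma rodrigues_norm_sq_one (u : EuclideanSpace ℝ (Fin 3)) (hu : ‖u‖ = 1) :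
    u 0 ^ 2 + u 1 ^ 2 + u 2 ^ 2 = 1 := by
  have h : ‖u‖ ^ 2 = 1 := by rw [hu]; norm_num
  rw [EuclideanSpace.norm_eq] at h
  rw [Real.sq_sqrt (by positivity)] at h
  simpa [Fin.sum_univ_three, Real.norm_eq_abs, sq_abs] using h

lemma rodrigues_cube_aux (a b c : ℝ) (h : a ^ 2 + b ^ 2 + c ^ 2 = 1) :
    (!![0, -c, b; c, 0, -a; -b, a, 0] : Matrix (Fin 3) (Fin 3) ℝ) ^ 3 =
      -(!![0, -c, b; c, 0, -a; -b, a, 0]) := by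
  rw [pow_succ, pow_two]
  ext i j
  fin_cases i <;> fin_cases j <;>
    simp [Matrix.mul_apply, Fin.sum_univ_three] <;>
    first
      | ring1
      | linear_combination a * h
      | linear_combination (-a) * h
      | linear_combination b * h
      | linear_combination (-b) * h
      | linear_combination c * h
      | linear_combination (-c) * h

lemma rodrigues_hat_cube (u : EuclideanSpace ℝ (Fin 3)) (hu : ‖u‖ = 1) :
    hat u ^ 3 = -hat u :=
  rodrigues_cube_aux (u 0) (u 1) (u 2) (rodrigues_norm_sq_one u hu)

section aux
variable {A : Matrix (Fin 3) (Fin 3) ℝ} (hA : A ^ 3 = -A)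
include hA

lemma rodrigues_pow_odd (k : ℕ) : A ^ (2 * k + 1) = ((-1 : ℝ) ^ k) • A := by
  induction k with
  | zero => simp
  | succ k ih =>
    have h : 2 * (k + 1) + 1 = (2 * k + 1) + 2 := by ring
    rw [h, pow_add, ih, Matrix.smul_mul, ← pow_succ', show (2:ℕ) + 1 = 3 from rfl, hA]
    simp [pow_succ]

lemma rodrigues_pow_even (k : ℕ) : A ^ (2 * k + 2) = ((-1 : ℝ) ^ k) • A ^ 2 := by
  have h : 2 * k + 2 = (2 * k + 1) + 1 := by ring
  rw [h, pow_succ, rodrigues_pow_odd hA, Matrix.smul_mul, ← pow_two]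

end aux

/-- Rodrigues' formula: for a unit vector `u ∈ ℝ³` and any angle `θ`,
`exp (θ û) = I + sin θ · û + (1 − cos θ) · û²`. -/
theorem rodrigues_formula (u : EuclideanSpace ℝ (Fin 3)) (hu : ‖u‖ = 1) (θ : ℝ) :
    exp (θ • hat u) = 1 + Real.sin θ • hat u + (1 - Real.cos θ) • (hat u ^ 2) := by
  letI : SeminormedRing (Matrix (Fin 3) (Fin 3) ℝ) := Matrix.linftyOpSemiNormedRing
  letI : NormedRing (Matrix (Fin 3) (Fin 3) ℝ) := Matrix.linftyOpNormedRing
  letI : NormedAlgebra ℝ (Matrix (Fin 3) (Fin 3) ℝ) := Matrix.linftyOpNormedAlgebra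
  have h3 : hat u ^ 3 = -hat u := rodrigues_hat_cube u hu
  set A := hat u with hAdef
  set F : ℕ → Matrix (Fin 3) (Fin 3) ℝ := fun n => ((n ! : ℝ)⁻¹) • (θ • A) ^ n with hF
  -- odd part
  have hodd : HasSum (fun k : ℕ => F (2 * k + 1)) (Real.sin θ • A) := by
    have hs := (Real.hasSum_sin θ).smul_const A
    refine hs.congr_fun fun k => ?_
    rw [hF]
    simp only
    rw [smul_pow, rodrigues_pow_odd h3, smul_smul, smul_smul]
    congr 1
    rw [div_eq_mul_inv]
    ring
  -- even part
  set g : ℕ → ℝ := fun n => (-1 : ℝ) ^ n * θ ^ (2 * n) / (2 * n)! with hg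
  have h0 : HasSum (fun n => g (n + 1)) (Real.cos θ - 1) := by
    apply (hasSum_nat_add_iff 1).2
    have : Real.cos θ - 1 + ∑ i ∈ Finset.range 1, g i = Real.cos θ := by
      simp [hg]
    rw [this]
    exact Real.hasSum_cos θ
  have h1 : HasSum (fun n => -g (n + 1)) (1 - Real.cos θ) := by
    simpa [neg_sub] using h0.neg
  have h2 := h1.smul_const (A ^ 2)
  have heven' : HasSum (fun k : ℕ => F (2 * (k + 1))) ((1 - Real.cos θ) • A ^ 2) := by
    refine h2.congr_fun fun k => ?_
    rw [hF, hg]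
    simp only
    have e : 2 * (k + 1) = 2 * k + 2 := by ring
    rw [e, smul_pow, rodrigues_pow_even h3, smul_smul, smul_smul]
    congr 1
    rw [pow_succ, div_eq_mul_inv]
    ring
  have heven : HasSum (fun k : ℕ => F (2 * k)) (1 + (1 - Real.cos θ) • A ^ 2) := by
    have := (hasSum_nat_add_iff (f := fun k => F (2 * k)) 1).1 heven'
    have hsum : (1 - Real.cos θ) • A ^ 2 + ∑ i ∈ Finset.range 1, F (2 * i)
        = 1 + (1 - Real.cos θ) • A ^ 2 := by
      simp [hF, add_comm]
    rwa [hsum] at this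
  have hmain := heven.even_add_odd hodd
  rw [exp_eq_tsum (𝕂 := ℝ)]
  exact hmain.tsum_eq.trans (by rw [add_right_comm])
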